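/- Every monotone polytope P ⊆ ℝ^n that is a simplex (i.e., has exactly n + 1 vertices) is GL(n,ℤ)-equivalent to the monotone simplex Δ = {x ∈ ℝ^n : x_i ≥ −1 for all i and Σ_i x_i ≤ 1}; that is, there exists A ∈ GL(n,ℤ) with A(P) = Δ. -/

import Mathlib

open Finset

/-- Real dot product of an integer vector with a real vector. -/
def dotZ {n : ℕ} (u : Fin n → ℤ) (x : Fin n → ℝ) : ℝ := ∑ i, (u i : ℝ) * x i

/-- Real dot product. -/
def dotR {n : ℕ} (u x : Fin n → ℝ) : ℝ := ∑ i, u i * x i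

/-- A point of `ℝ^n` is a lattice point if all its coordinates are integers. -/
def IsLatticePt {n : ℕ} (x : Fin n → ℝ) : Prop := ∀ i, ∃ m : ℤ, x i = (m : ℝ)

/-- A (full-dimensional) lattice polytope: the convex hull of a finite set of
lattice points whose affine span is all of `ℝ^n`. -/
def IsLatticePolytope {n : ℕ} (P : Set (Fin n → ℝ)) : Prop :=
  ∃ V : Finset (Fin n → ℝ), (∀ v ∈ V, IsLatticePt v) ∧
    P = convexHull ℝ (V : Set (Fin n → ℝ)) ∧ affineSpan ℝ P = ⊤

/-- `F` is an (exposed) face of `P`: the set of maximizers over `P` of some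
linear functional. -/
def IsFaceOf {n : ℕ} (P F : Set (Fin n → ℝ)) : Prop :=
  ∃ u : Fin n → ℝ, F = {x ∈ P | ∀ y ∈ P, dotR u y ≤ dotR u x}

/-- The dimension of a subset of `ℝ^n` (dimension of its affine hull). -/
noncomputable def dimSet {n : ℕ} (F : Set (Fin n → ℝ)) : ℕ :=
  Module.finrank ℝ (vectorSpan ℝ F)

/-- A facet of `P`: a nonempty face of dimension `n - 1`. -/
def IsFacetOf {n : ℕ} (P F : Set (Fin n → ℝ)) : Prop :=
  IsFaceOf P F ∧ F.Nonempty ∧ dimSet F + 1 = n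

/-- A vertex of `P`: a point such that `{v}` is a face. -/
def IsVertexOf {n : ℕ} (P : Set (Fin n → ℝ)) (v : Fin n → ℝ) : Prop :=
  IsFaceOf P {v}

/-- An edge of `P`: a face which is a nondegenerate segment. -/
def IsEdgeOf {n : ℕ} (P E : Set (Fin n → ℝ)) : Prop :=
  IsFaceOf P E ∧ ∃ a b : Fin n → ℝ, a ≠ b ∧ E = segment ℝ a b

/-- An integer vector is primitive if the gcd of its coordinates is 1. -/
def IsPrimitiveZ {n : ℕ} (u : Fin n → ℤ) : Prop := Finset.univ.gcd u = 1

/-- `u` is the primitive outer normal of the facet `F` of `P`. -/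
def IsFacetNormal {n : ℕ} (P F : Set (Fin n → ℝ)) (u : Fin n → ℤ) : Prop :=
  IsPrimitiveZ u ∧ IsFacetOf P F ∧
    F = {x ∈ P | ∀ y ∈ P, dotZ u y ≤ dotZ u x}

/-- `u` is the central normal vector of the face `G` of `P`: the sum of the
primitive outer normals of all the facets of `P` containing `G`. -/
def IsCentralNormal {n : ℕ} (P G : Set (Fin n → ℝ)) (u : Fin n → ℤ) : Prop :=
  ∃ (m : ℕ) (Fs : Fin m → Set (Fin n → ℝ)) (us : Fin m → Fin n → ℤ),
    Function.Injective Fs ∧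
    (∀ i, G ⊆ Fs i ∧ IsFacetNormal P (Fs i) (us i)) ∧
    (∀ F, IsFacetOf P F → G ⊆ F → ∃ i, F = Fs i) ∧
    u = ∑ i, us i

/-- The lattice length of the segment from `a` to `b`. -/
def LatticeLength {n : ℕ} (a b : Fin n → ℝ) (ℓ : ℕ) : Prop :=
  ∃ d : Fin n → ℤ, IsPrimitiveZ d ∧ ∀ i, b i - a i = (ℓ : ℝ) * (d i : ℝ)

/-- `d` is the primitive integer direction vector of the edge `E` at its
endpoint `v`, pointing away from `v`. -/
def EdgeDirAt {n : ℕ} (v : Fin n → ℝ) (E : Set (Fin n → ℝ)) (d : Fin n → ℤ) : Prop :=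
  IsPrimitiveZ d ∧ ∃ w ∈ E, ∃ t : ℝ, 0 < t ∧ ∀ i, w i - v i = t * (d i : ℝ)

/-- A polytope is smooth (Delzant) if every vertex lies in exactly `n` facets
and the primitive direction vectors of the `n` edges incident to each vertex
form a basis of the lattice `ℤ^n`. -/
def IsSmoothPolytope {n : ℕ} (P : Set (Fin n → ℝ)) : Prop :=
  ∀ v : Fin n → ℝ, IsVertexOf P v →
    (∃ Fs : Fin n → Set (Fin n → ℝ), Function.Injective Fs ∧
      (∀ i, IsFacetOf P (Fs i) ∧ v ∈ Fs i) ∧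
      (∀ F, IsFacetOf P F → v ∈ F → ∃ i, F = Fs i)) ∧
    (∃ (E : Fin n → Set (Fin n → ℝ)) (d : Fin n → Fin n → ℤ),
      Function.Injective E ∧
      (∀ i, IsEdgeOf P (E i) ∧ v ∈ E i ∧ EdgeDirAt v (E i) (d i)) ∧
      (∀ E', IsEdgeOf P E' → v ∈ E' → ∃ i, E' = E i) ∧
      IsUnit (Matrix.det (Matrix.of d)))

/-- A polytope is reflexive if the origin is in its interior and every facet is
supported at value `1` by its primitive outer normal. -/
def IsReflexivePolytope {n : ℕ} (P : Set (Fin n → ℝ)) : Prop :=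
  (0 : Fin n → ℝ) ∈ interior P ∧
  ∀ F u, IsFacetNormal P F u → ∀ x ∈ F, dotZ u x = 1

/-- A monotone polytope (= smooth reflexive polytope). -/
def IsMonotonePolytope {n : ℕ} (P : Set (Fin n → ℝ)) : Prop :=
  IsLatticePolytope P ∧ IsSmoothPolytope P ∧ IsReflexivePolytope P

/-- `F` is a nonempty face of `P` of codimension `k`. -/
def HasCodim {n : ℕ} (P F : Set (Fin n → ℝ)) (k : ℕ) : Prop :=
  IsFaceOf P F ∧ F.Nonempty ∧ dimSet F + k = n

/-- The monotone blow-up `P ∩ {x : u·x ≤ 1}` of a monotone polytope at a face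
with central normal `u`. -/
def blowupSet {n : ℕ} (P : Set (Fin n → ℝ)) (u : Fin n → ℤ) : Set (Fin n → ℝ) :=
  {x ∈ P | dotZ u x ≤ 1}

/-- The region removed from `P` by the monotone blow-up with central normal `u`. -/
def removedRegion {n : ℕ} (P : Set (Fin n → ℝ)) (u : Fin n → ℤ) : Set (Fin n → ℝ) :=
  {x ∈ P | 1 < dotZ u x}

/-- `P` admits a monotone blow-up at its face `F` with central normal `u`:
every vertex of `P` not in `F` satisfies `u·v ≤ 0`, and the blow-up is again a
monotone polytope. -/
def AdmitsMonotoneBlowup {n : ℕ} (P F : Set (Fin n → ℝ)) (u : Fin n → ℤ) : Prop :=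
  IsCentralNormal P F u ∧
  (∀ v, IsVertexOf P v → v ∉ F → dotZ u v ≤ 0) ∧
  IsMonotonePolytope (blowupSet P u)

/-- The monotone simplex `{x : x i ≥ -1 ∀ i, ∑ x i ≤ 1}` in `ℝ^n`. -/
def monotoneSimplex (n : ℕ) : Set (Fin n → ℝ) :=
  {x | (∀ i, -1 ≤ x i) ∧ ∑ i, x i ≤ 1}

/-- `AGL(n,ℤ)`-equivalence of subsets of `ℝ^n`: some map `x ↦ Ax + t` with
`A ∈ GL(n,ℤ)` and `t ∈ ℤ^n` maps `P` onto `Q`. -/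
def AGLEquiv {n : ℕ} (P Q : Set (Fin n → ℝ)) : Prop :=
  ∃ (A : Matrix (Fin n) (Fin n) ℤ) (t : Fin n → ℤ), IsUnit A.det ∧
    (fun x : Fin n → ℝ => fun i => (∑ j, (A i j : ℝ) * x j) + (t i : ℝ)) '' P = Q

/-!
The vertices `v₀, …, vₙ` of `P` are affinely independent lattice points, so every edge at `v_k`
joins it to another vertex `v_j`, and `v_j - v_k = ℓ(k, j) • d` with `d` primitive and `ℓ(k, j)`
the (symmetric) lattice length of the edge. Smoothness makes the edge directions at `v_k` the rows
of a unimodular matrix `D`; the rows of `-(Dᵀ)⁻¹` are then primitive facet normals, and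
reflexivity forces the normal of the facet opposite `v_j` to equal `1` on the other vertices and
`1 - ℓ(k, j)` on `v_j`. Applied to the barycentric expression `0 = ∑ λ_j v_j` this gives
`λ_j ℓ(k, j) = 1`, so by symmetry all `λ_j` agree, every edge has lattice length `n + 1`, and
`(Dᵀ)⁻¹` maps the vertices of `P` onto those of `Δ`.
-/

open Matrix

section Primitive

variable {n : ℕ}

lemma IsPrimitiveZ.ne_zero {d : Fin n → ℤ} (hd : IsPrimitiveZ d) : d ≠ 0 := by
  rintro rfl
  have h0 : univ.gcd (0 : Fin n → ℤ) = 0 := Finset.gcd_eq_zero_iff.mpr fun _ _ => rfl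
  exact zero_ne_one (h0.symm.trans hd)

lemma IsPrimitiveZ.of_dotProduct_eq_one {u x : Fin n → ℤ} (h : u ⬝ᵥ x = 1) : IsPrimitiveZ u := by
  have hdvd : univ.gcd u ∣ 1 := h ▸ dvd_sum fun i _ => (gcd_dvd (mem_univ i)).mul_right _
  exact Int.eq_one_of_dvd_one (Int.nonneg_of_normalize_eq_self Finset.normalize_gcd) hdvd

lemma IsPrimitiveZ.gcd_smul {d : Fin n → ℤ} (hd : IsPrimitiveZ d) {g : ℤ} (hg : 0 ≤ g) :
    univ.gcd (g • d) = g := by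
  rw [show g • d = fun i => g * d i from rfl, Finset.gcd_mul_left, Int.normalize_of_nonneg hg, hd,
    mul_one]

lemma gcd_neg_eq (z : Fin n → ℤ) : univ.gcd (-z) = univ.gcd z := by
  have h : -z = fun i => -1 * z i := by ext; simp
  rw [h, Finset.gcd_mul_left, Int.normalize_of_nonpos (by norm_num), neg_neg, one_mul]

/-- Bezout for `d` turns the real proportionality factor into an integer. -/
lemma IsPrimitiveZ.exists_eq_smul {d z : Fin n → ℤ} (hd : IsPrimitiveZ d) {r : ℝ} (hr : 0 < r)
    (h : ∀ i, (z i : ℝ) = r * d i) : ∃ g : ℤ, 0 < g ∧ z = g • d := by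
  obtain ⟨c, hc⟩ := Finset.gcd_eq_sum_mul univ d
  rw [hd] at hc
  have hr' : r = ((∑ i, z i * c i : ℤ) : ℝ) := by
    have := congrArg (fun m : ℤ => r * (m : ℝ)) hc
    simp only [Int.cast_one, mul_one, Int.cast_sum, Int.cast_mul, Finset.mul_sum] at this
    rw [this]
    push_cast
    exact Finset.sum_congr rfl fun i _ => by rw [h i]; ring
  refine ⟨_, by exact_mod_cast hr' ▸ hr, funext fun i => ?_⟩
  have := h i
  rw [hr'] at this
  exact_mod_cast this

end Primitive

section Convex

variable {E : Type*} [NormedAddCommGroup E] [NormedSpace ℝ E] {s : Set E}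

/-- Strictly separating an extreme point `x` of a polytope from the hull of the remaining
generators exposes `x`. -/
lemma exposedPoints_convexHull_of_finite (hs : s.Finite) :
    (convexHull ℝ s).exposedPoints ℝ = (convexHull ℝ s).extremePoints ℝ := by
  refine (exposedPoints_subset_extremePoints).antisymm fun x hx => ?_
  have hxs : x ∈ s := extremePoints_convexHull_subset hx
  have hxK : x ∉ convexHull ℝ (s \ {x}) := fun hK =>
    ((convex_convexHull ℝ _).mem_extremePoints_iff_mem_sdiff_convexHull_sdiff.mp hx).2
      (convexHull_mono (Set.sdiff_subset_sdiff_left (subset_convexHull ℝ _)) hK)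
  obtain ⟨f, c, hfK, hfx⟩ := geometric_hahn_banach_closed_point (convex_convexHull ℝ _)
    (hs.sdiff.isClosed_convexHull ℝ) hxK
  refine ⟨hx.1, f, fun y hy => ?_⟩
  rcases (s \ {x}).eq_empty_or_nonempty with he | hne
  · rw [← Set.insert_sdiff_self_of_mem hxs, he, insert_empty_eq, convexHull_singleton,
      Set.mem_singleton_iff] at hy
    simp [hy]
  rw [← Set.insert_sdiff_self_of_mem hxs, convexHull_insert hne,
    convexJoin_singleton_left] at hy
  obtain ⟨z, hzK, a, b, ha, hb, hab, rfl⟩ := Set.mem_iUnion₂.mp hy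
  have hfz : f z < f x := (hfK z hzK).trans hfx
  simp only [map_add, map_smul, smul_eq_mul]
  have hfx' : f x = a * f x + b * f x := by rw [← add_mul, hab, one_mul]
  have hb' := mul_nonneg hb (sub_nonneg.mpr hfz.le)
  refine ⟨by nlinarith, fun hle => ?_⟩
  obtain rfl : b = 0 :=
    (mul_eq_zero.mp (by linarith : b * (f x - f z) = 0)).resolve_right (sub_pos.mpr hfz).ne'
  simp [show a = 1 by linarith]

lemma IsExtreme.eq_convexHull_inter_extremePoints (hs : s.Finite) {B : Set E}
    (hB : IsExtreme ℝ (convexHull ℝ s) B) (hBc : IsClosed B) (hBconv : Convex ℝ B) :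
    B = convexHull ℝ (B ∩ (convexHull ℝ s).extremePoints ℝ) := by
  refine subset_antisymm (le_of_eq ?_) (convexHull_min Set.inter_subset_left hBconv)
  have hfin : (B ∩ (convexHull ℝ s).extremePoints ℝ).Finite :=
    hs.subset (Set.inter_subset_right.trans extremePoints_convexHull_subset)
  calc B = closure (convexHull ℝ (B.extremePoints ℝ)) :=
        (closure_convexHull_extremePoints
          ((hs.isCompact_convexHull ℝ).of_isClosed_subset hBc hB.1) hBconv).symm
    _ = _ := by rw [hB.extremePoints_eq, (hfin.isClosed_convexHull ℝ).closure_eq]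

lemma convexHull_extremePoints_convexHull (hs : s.Finite) :
    convexHull ℝ ((convexHull ℝ s).extremePoints ℝ) = convexHull ℝ s := by
  conv_rhs => rw [(IsExtreme.refl ℝ (convexHull ℝ s)).eq_convexHull_inter_extremePoints hs
    (hs.isClosed_convexHull ℝ) (convex_convexHull ℝ s)]
  rw [Set.inter_eq_right.mpr (extremePoints_subset)]

end Convex

section Affine

variable {E ι : Type*} [AddCommGroup E] [Module ℝ E]

lemma collinear_segment (a b : E) : Collinear ℝ (segment ℝ a b) := by
  rw [← convexHull_pair, Collinear, ← direction_affineSpan, affineSpan_convexHull,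
    direction_affineSpan]
  exact collinear_pair ℝ a b

lemma mul_eq_one_of_sum_smul_eq_zero [Fintype ι] [DecidableEq ι] (f : E →ₗ[ℝ] ℝ) {w : ι → E}
    {μ : ι → ℝ} (hμ : ∑ j, μ j • w j = 0) (hμ1 : ∑ j, μ j = 1) {i : ι} {g : ℝ}
    (hf : ∀ j, f (w j) = if j = i then g - 1 else -1) :
    μ i * g = 1 := by
  have h := congrArg f hμ
  have hsplit : ∀ j, μ j * (if j = i then g - 1 else -1) = (if j = i then μ j * g else 0) - μ j :=
    fun j => by split_ifs <;> ring
  simp only [map_sum, map_smul, smul_eq_mul, hf, map_zero, hsplit, sum_sub_distrib,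
    sum_ite_eq', mem_univ, if_true, hμ1] at h
  linarith

end Affine

lemma eq_card_of_mul_eq_one {m : ℕ} {μ : Fin m → ℝ} (hμ : ∑ j, μ j = 1)
    {ℓ : Fin m → Fin m → ℝ} (hsymm : ∀ j k, ℓ j k = ℓ k j)
    (h : ∀ j k, j ≠ k → μ j * ℓ k j = 1) {j k : Fin m} (hjk : j ≠ k) : ℓ k j = m := by
  have hconst : ∀ i, μ i = μ j := fun i => by
    rcases eq_or_ne i j with rfl | hij
    · rfl
    have h₁ := h i j hij
    have h₂ := h j i hij.symm
    rw [hsymm] at h₁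
    exact mul_right_cancel₀ (right_ne_zero_of_mul_eq_one h₂) (h₁.trans h₂.symm)
  have hm : (m : ℝ) * μ j = 1 := by
    rw [← hμ, sum_congr rfl fun i _ => hconst i, sum_const, card_univ, Fintype.card_fin,
      nsmul_eq_mul]
  calc ℓ k j = (m * μ j) * ℓ k j := by rw [hm, one_mul]
    _ = m := by rw [mul_assoc, h j k hjk, mul_one]

section Faces

variable {n : ℕ}

def dotRCLM (u : Fin n → ℝ) : StrongDual ℝ (Fin n → ℝ) := ∑ i, u i • ContinuousLinearMap.proj i

@[simp] lemma dotRCLM_apply (u x : Fin n → ℝ) : dotRCLM u x = dotR u x := by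
  simp [dotRCLM, dotR]

lemma isFaceOf_iff {P F : Set (Fin n → ℝ)} :
    IsFaceOf P F ↔ ∃ l : StrongDual ℝ (Fin n → ℝ), F = l.toExposed P := by
  refine ⟨fun ⟨u, hu⟩ => ⟨dotRCLM u, by simpa [ContinuousLinearMap.toExposed]⟩,
    fun ⟨l, hl⟩ => ?_⟩
  obtain ⟨u, hu⟩ : ∃ u, ⇑l = dotR u :=
    ⟨fun i => l (fun j => if i = j then 1 else 0), funext fun x => by
      rw [← l.coe_coe, LinearMap.pi_apply_eq_sum_univ l.toLinearMap x, dotR]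
      simp [mul_comm]⟩
  exact ⟨u, by rw [hl, ContinuousLinearMap.toExposed, hu]⟩

lemma IsFaceOf.isExposed {P F : Set (Fin n → ℝ)} (h : IsFaceOf P F) : IsExposed ℝ P F :=
  fun _ => isFaceOf_iff.mp h

lemma isVertexOf_iff_mem_exposedPoints {P : Set (Fin n → ℝ)} {v : Fin n → ℝ} :
    IsVertexOf P v ↔ v ∈ P.exposedPoints ℝ := by
  rw [mem_exposedPoints_iff_exposed_singleton, IsVertexOf, isFaceOf_iff]
  exact ⟨fun h _ => h, fun h => h (Set.singleton_nonempty v)⟩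

lemma IsFaceOf.eq_convexHull_image {ι : Type*} [Finite ι] {w : ι → Fin n → ℝ}
    {F : Set (Fin n → ℝ)} (hF : IsFaceOf (convexHull ℝ (Set.range w)) F) :
    F = convexHull ℝ (w '' {i | w i ∈ F}) := by
  have hfin := Set.finite_range w
  have hexp := hF.isExposed
  have hconv := hexp.convex (convex_convexHull ℝ _)
  refine subset_antisymm ?_ (convexHull_min (by rintro _ ⟨i, hi, rfl⟩; exact hi) hconv)
  calc F = convexHull ℝ (F ∩ (convexHull ℝ (Set.range w)).extremePoints ℝ) :=
        hexp.isExtreme.eq_convexHull_inter_extremePoints hfin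
          (hexp.isClosed (hfin.isClosed_convexHull ℝ)) hconv
    _ ⊆ convexHull ℝ (w '' {i | w i ∈ F}) := by
        refine convexHull_mono fun x ⟨hxF, hx⟩ => ?_
        obtain ⟨i, rfl⟩ := extremePoints_convexHull_subset hx
        exact ⟨i, hxF, rfl⟩

lemma AffineIndependent.exists_eq_segment_of_isEdgeOf {ι : Type*} [Finite ι]
    {w : ι → Fin n → ℝ} (hw : AffineIndependent ℝ w) {E : Set (Fin n → ℝ)}
    (hE : IsEdgeOf (convexHull ℝ (Set.range w)) E) {k : ι} (hk : w k ∈ E) :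
    ∃ j ≠ k, E = segment ℝ (w k) (w j) := by
  obtain ⟨hface, a, b, hab, rfl⟩ := hE
  have hE := hface.eq_convexHull_image
  obtain ⟨j, hj, hjk⟩ : ∃ j, w j ∈ segment ℝ a b ∧ j ≠ k := by
    by_contra! h
    have hsub : w '' {i | w i ∈ segment ℝ a b} ⊆ {w k} := by
      rintro _ ⟨i, hi, rfl⟩
      rw [h i hi, Set.mem_singleton_iff]
    have hpt := hE.trans_subset ((convexHull_mono hsub).trans (convexHull_singleton (w k)).le)
    exact hab ((hpt (left_mem_segment ℝ a b)).trans (hpt (right_mem_segment ℝ a b)).symm)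
  refine ⟨j, hjk, subset_antisymm ?_ ((convex_segment a b).segment_subset hk hj)⟩
  have hline : {i | w i ∈ segment ℝ a b} ⊆ {k, j} := fun i hi =>
    (hw.mem_affineSpan_iff i {k, j}).mp <| by
      rw [Set.image_pair]
      exact (collinear_segment a b).mem_affineSpan_of_mem_of_ne hk hj hi
        (hw.injective.ne hjk.symm)
  rw [hE]
  refine (convexHull_mono (Set.image_mono hline)).trans ?_
  rw [Set.image_pair, convexHull_pair]

lemma AffineIndependent.dimSet_convexHull_image_compl {w : Fin (n + 1) → Fin n → ℝ}
    (hw : AffineIndependent ℝ w) (hn : 0 < n) (i : Fin (n + 1)) :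
    dimSet (convexHull ℝ (w '' {i}ᶜ)) + 1 = n := by
  classical
  have hcard : (univ.erase i).card = (n - 1) + 1 := by
    rw [card_erase_of_mem (mem_univ i), card_univ, Fintype.card_fin]
    omega
  have h := hw.finrank_vectorSpan_image_finset hcard
  rw [dimSet, ← direction_affineSpan, affineSpan_convexHull, direction_affineSpan]
  rw [coe_image, coe_erase, coe_univ, ← Set.compl_eq_univ_sdiff] at h
  omega

lemma isLinearMap_dotZ (u : Fin n → ℤ) : IsLinearMap ℝ (dotZ u) where
  map_add x y := by simp [dotZ, mul_add, sum_add_distrib]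
  map_smul c x := by simp [dotZ, mul_sum, mul_left_comm]

lemma dotZ_intCast (u z : Fin n → ℤ) : dotZ u (Int.cast ∘ z) = ((u ⬝ᵥ z : ℤ) : ℝ) := by
  simp [dotZ, dotProduct]

lemma mulVec_intCast (A : Matrix (Fin n) (Fin n) ℤ) (z : Fin n → ℤ) :
    A.map (Int.cast : ℤ → ℝ) *ᵥ (Int.cast ∘ z) = Int.cast ∘ (A *ᵥ z) :=
  funext fun a => by simpa using (RingHom.map_mulVec (Int.castRingHom ℝ) A z a).symm

lemma dotZ_le_of_forall_le {ι : Type*} {w : ι → Fin n → ℝ} {ν : Fin n → ℤ} {c : ℝ}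
    (h : ∀ j, dotZ ν (w j) ≤ c) {y : Fin n → ℝ} (hy : y ∈ convexHull ℝ (Set.range w)) :
    dotZ ν y ≤ c :=
  convexHull_min (Set.range_subset_iff.mpr h) (convex_halfSpace_le (isLinearMap_dotZ ν) c) hy

lemma AffineIndependent.isFacetNormal_convexHull_image_compl {w : Fin (n + 1) → Fin n → ℝ}
    (hw : AffineIndependent ℝ w) (hn : 0 < n) {ν : Fin n → ℤ} (hν : IsPrimitiveZ ν)
    {i : Fin (n + 1)} {c : ℝ} (hc : ∀ j ≠ i, dotZ ν (w j) = c) (hi : dotZ ν (w i) < c) :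
    IsFacetNormal (convexHull ℝ (Set.range w)) (convexHull ℝ (w '' {i}ᶜ)) ν := by
  set P := convexHull ℝ (Set.range w)
  set M := {x ∈ P | ∀ y ∈ P, dotZ ν y ≤ dotZ ν x}
  have hle : ∀ y ∈ P, dotZ ν y ≤ c := fun y => dotZ_le_of_forall_le fun j => by
    rcases eq_or_ne j i with rfl | hj
    exacts [hi.le, (hc j hj).le]
  have : Nontrivial (Fin (n + 1)) := Fin.nontrivial_iff_two_le.mpr (by omega)
  obtain ⟨j₀, hj₀⟩ := exists_ne i
  have hmem : ∀ j, w j ∈ M ↔ j ≠ i := fun j => by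
    refine ⟨?_, fun hj => ⟨subset_convexHull ℝ _ ⟨j, rfl⟩, fun y hy => (hc j hj).symm ▸ hle y hy⟩⟩
    rintro ⟨-, hj⟩ rfl
    have := hj (w j₀) (subset_convexHull ℝ _ ⟨j₀, rfl⟩)
    rw [hc j₀ hj₀] at this
    linarith
  have hface : IsFaceOf P M := ⟨Int.cast ∘ ν, rfl⟩
  have hM : M = convexHull ℝ (w '' {i}ᶜ) := by
    rw [hface.eq_convexHull_image, show {j | w j ∈ M} = {i}ᶜ from Set.ext hmem]
  rw [← hM]
  exact ⟨hν, ⟨hface, ⟨w j₀, (hmem j₀).mpr hj₀⟩, hM ▸ hw.dimSet_convexHull_image_compl hn i⟩, rfl⟩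

lemma EdgeDirAt.exists_eq_add_smul {p q d : Fin n → ℤ}
    (h : EdgeDirAt (Int.cast ∘ p) (segment ℝ (Int.cast ∘ p) (Int.cast ∘ q)) d) :
    ∃ g : ℤ, 0 < g ∧ q = p + g • d := by
  obtain ⟨hd, x, hx, t, ht, hxt⟩ := h
  rw [segment_eq_image'] at hx
  obtain ⟨θ, ⟨hθ0, -⟩, rfl⟩ := hx
  simp only [Pi.add_apply, Pi.smul_apply, Pi.sub_apply, Function.comp_apply, smul_eq_mul,
    add_sub_cancel_left] at hxt
  have hθ : 0 < θ := hθ0.lt_of_ne fun h0 => hd.ne_zero <| funext fun i => by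
    have := hxt i
    rw [← h0, zero_mul] at this
    exact_mod_cast (mul_eq_zero.mp this.symm).resolve_left ht.ne'
  obtain ⟨g, hg, hz⟩ := hd.exists_eq_smul (z := q - p) (div_pos ht hθ) fun i => by
    rw [Pi.sub_apply, Int.cast_sub]
    field_simp
    linarith [hxt i]
  exact ⟨g, hg, by rw [← hz]; abel⟩

lemma exists_range_intCast_eq {V : Finset (Fin n → ℝ)} (hV : ∀ x ∈ V, IsLatticePt x) {m : ℕ}
    (hm : V.card = m) :
    ∃ v : Fin m → Fin n → ℤ, Set.range (fun k => (Int.cast ∘ v k : Fin n → ℝ)) = V := by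
  have hz : ∀ x : V, ∃ z : Fin n → ℤ, Int.cast ∘ z = (x : Fin n → ℝ) := fun x => by
    choose z hz using hV x x.2
    exact ⟨z, funext fun i => (hz i).symm⟩
  choose z hz using hz
  let e : Fin m ≃ V := (Fintype.equivFinOfCardEq (by simpa using hm)).symm
  refine ⟨fun k => z (e k), Set.ext fun x => ⟨?_, fun hx => ⟨e.symm ⟨x, hx⟩, by simp [hz]⟩⟩⟩
  rintro ⟨k, rfl⟩
  simp [hz]

lemma exists_intCast_vertices {V' V : Finset (Fin n → ℝ)} (hV'lat : ∀ x ∈ V', IsLatticePt x)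
    (hV : ∀ x, IsVertexOf (convexHull ℝ (V' : Set (Fin n → ℝ))) x ↔ x ∈ V) {m : ℕ}
    (hm : V.card = m) :
    ∃ v : Fin m → Fin n → ℤ, Set.range (fun k => (Int.cast ∘ v k : Fin n → ℝ)) = V ∧
      convexHull ℝ (V' : Set (Fin n → ℝ)) = convexHull ℝ (Set.range fun k => Int.cast ∘ v k) := by
  have hext : (convexHull ℝ (V' : Set (Fin n → ℝ))).extremePoints ℝ = V := by
    ext x
    rw [← exposedPoints_convexHull_of_finite V'.finite_toSet, ← isVertexOf_iff_mem_exposedPoints,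
      hV, mem_coe]
  obtain ⟨v, hv⟩ := exists_range_intCast_eq
    (fun x hx => hV'lat x (extremePoints_convexHull_subset (by rw [hext]; exact mem_coe.mpr hx)))
    hm
  refine ⟨v, hv, ?_⟩
  rw [hv, ← hext, convexHull_extremePoints_convexHull V'.finite_toSet]

lemma affineIndependent_of_affineSpan_eq_top {w : Fin (n + 1) → Fin n → ℝ}
    (h : affineSpan ℝ (Set.range w) = ⊤) : AffineIndependent ℝ w := by
  rw [affineIndependent_iff_finrank_vectorSpan_eq ℝ w (Fintype.card_fin _),
    ← direction_affineSpan, h, AffineSubspace.direction_top, finrank_top, Module.finrank_fin_fun]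

end Faces

section Vertex

variable {n : ℕ} {v : Fin (n + 1) → Fin n → ℤ}

lemma exists_eq_of_injective_of_ne {σ : Fin n → Fin (n + 1)} (hσ : Function.Injective σ)
    {k : Fin (n + 1)} (hk : ∀ i, σ i ≠ k) {j : Fin (n + 1)} (hj : j ≠ k) : ∃ i, σ i = j := by
  classical
  have himage : univ.image σ = univ.erase k := by
    refine eq_of_subset_of_card_le (fun x hx => ?_) ?_
    · obtain ⟨i, -, rfl⟩ := mem_image.mp hx
      exact mem_erase.mpr ⟨hk i, mem_univ _⟩
    · rw [card_image_of_injective _ hσ, card_erase_of_mem (mem_univ k)]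
      simp
  have hjk : j ∈ univ.image σ := himage ▸ mem_erase.mpr ⟨hj, mem_univ j⟩
  simpa using hjk

lemma exists_edge_endpoints (hw : AffineIndependent ℝ fun k => (Int.cast ∘ v k : Fin n → ℝ))
    (k : Fin (n + 1)) {E : Fin n → Set (Fin n → ℝ)} {d : Fin n → Fin n → ℤ}
    (hE : ∀ i, IsEdgeOf (convexHull ℝ (Set.range fun k => Int.cast ∘ v k)) (E i) ∧
      Int.cast ∘ v k ∈ E i ∧ EdgeDirAt (Int.cast ∘ v k) (E i) (d i))
    (hd : IsUnit (Matrix.of d).det) :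
    ∃ σ : Fin n → Fin (n + 1), Function.Injective σ ∧ (∀ i, σ i ≠ k) ∧
      (∀ i, 0 < univ.gcd (v (σ i) - v k)) ∧
      ∀ i, v (σ i) = v k + univ.gcd (v (σ i) - v k) • d i := by
  have key : ∀ i, ∃ j ≠ k, ∃ g : ℤ, 0 < g ∧ v j = v k + g • d i := fun i => by
    obtain ⟨hEi, hk, hdir⟩ := hE i
    obtain ⟨j, hjk, hseg⟩ := hw.exists_eq_segment_of_isEdgeOf hEi hk
    rw [hseg] at hdir
    exact ⟨j, hjk, hdir.exists_eq_add_smul⟩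
  choose σ hσk g hg hσ using key
  have hgcd : ∀ i, univ.gcd (v (σ i) - v k) = g i := fun i => by
    rw [hσ i, add_sub_cancel_left, (hE i).2.2.1.gcd_smul (hg i).le]
  refine ⟨σ, fun i i' h => ?_, hσk, fun i => by rw [hgcd]; exact hg i,
    fun i => by rw [hgcd]; exact hσ i⟩
  by_contra hne
  have hgi : g i = g i' := by rw [← hgcd, ← hgcd, h]
  have hdd : d i = d i' := smul_right_injective _ (hg i).ne' <| add_left_cancel <|
    (hσ i).symm.trans (h ▸ hgi ▸ hσ i')
  exact hd.ne_zero (Matrix.det_zero_of_row_eq hne hdd)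

/-- The rows of `(Dᵀ)⁻¹`, `D` the matrix of edge directions at a vertex, are minus the primitive
normals of the facets through that vertex; reflexivity pins their values on all vertices. -/
lemma inv_transpose_mulVec_vertex (hw : AffineIndependent ℝ fun k => (Int.cast ∘ v k : Fin n → ℝ))
    (hrefl : ∀ F u, IsFacetNormal (convexHull ℝ (Set.range fun k => Int.cast ∘ v k)) F u →
      ∀ x ∈ F, dotZ u x = 1)
    {k : Fin (n + 1)} {σ : Fin n → Fin (n + 1)} (hσk : ∀ i, σ i ≠ k)
    (hσ : ∀ j ≠ k, ∃ i, σ i = j) {d : Fin n → Fin n → ℤ} (hd : IsUnit (Matrix.of d).det)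
    {g : Fin n → ℤ} (hg : ∀ i, 0 < g i) (hv : ∀ i, v (σ i) = v k + g i • d i)
    (j : Fin (n + 1)) (a : Fin n) :
    ((Matrix.of d)⁻¹ᵀ *ᵥ v j) a = if j = σ a then g a - 1 else -1 := by
  set A := (Matrix.of d)⁻¹ᵀ
  have hAd : ∀ b, A a ⬝ᵥ d b = if b = a then 1 else 0 := fun b => by
    have := congrFun (congrFun (Matrix.mul_nonsing_inv (Matrix.of d) hd) b) a
    rw [Matrix.mul_apply, Matrix.one_apply] at this
    simpa [A, dotProduct, mul_comm] using this
  set ν := -A a with hν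
  have hνd : ∀ b, ν ⬝ᵥ d b = if b = a then -1 else 0 := fun b => by
    rw [hν, neg_dotProduct, hAd]
    split_ifs <;> rfl
  have hνv : ∀ b, ν ⬝ᵥ v (σ b) = ν ⬝ᵥ v k - if b = a then g a else 0 := fun b => by
    rw [hv b, dotProduct_add, dotProduct_smul, hνd]
    split_ifs with hb
    · rw [hb, smul_eq_mul, mul_neg_one, sub_eq_add_neg]
    · simp
  have hc : ∀ j ≠ σ a, dotZ ν (Int.cast ∘ v j) = ((ν ⬝ᵥ v k : ℤ) : ℝ) := fun j hj => by
    rw [dotZ_intCast]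
    rcases eq_or_ne j k with rfl | hjk
    · rfl
    obtain ⟨b, rfl⟩ := hσ j hjk
    rw [hνv, if_neg (fun h => hj (congrArg σ h)), sub_zero]
  have hi : dotZ ν (Int.cast ∘ v (σ a)) < ((ν ⬝ᵥ v k : ℤ) : ℝ) := by
    rw [dotZ_intCast, hνv, if_pos rfl]
    exact_mod_cast sub_lt_self _ (hg a)
  have hprim : IsPrimitiveZ ν := IsPrimitiveZ.of_dotProduct_eq_one (x := -d a) <| by
    rw [dotProduct_neg, hνd, if_pos rfl, neg_neg]
  have hfacet := hw.isFacetNormal_convexHull_image_compl a.pos hprim hc hi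
  have hone : ∀ j ≠ σ a, ν ⬝ᵥ v j = 1 := fun j hj => by
    have := hrefl _ _ hfacet _ (subset_convexHull ℝ _ ⟨j, hj, rfl⟩)
    rwa [dotZ_intCast, Int.cast_eq_one] at this
  have hA : (A *ᵥ v j) a = -(ν ⬝ᵥ v j) := by rw [hν, neg_dotProduct, neg_neg]; rfl
  rw [hA]
  split_ifs with hj
  · rw [hj, hνv, if_pos rfl, hone k (hσk a).symm]
    ring
  · rw [hone j hj]

lemma IsSmoothPolytope.exists_vertex_chart
    (hsmooth : IsSmoothPolytope (convexHull ℝ (Set.range fun k => Int.cast ∘ v k)))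
    (hw : AffineIndependent ℝ fun k => (Int.cast ∘ v k : Fin n → ℝ))
    (hrefl : ∀ F u, IsFacetNormal (convexHull ℝ (Set.range fun k => Int.cast ∘ v k)) F u →
      ∀ x ∈ F, dotZ u x = 1)
    {k : Fin (n + 1)} (hk : IsVertexOf (convexHull ℝ (Set.range fun k => Int.cast ∘ v k))
      (Int.cast ∘ v k)) :
    ∃ (A : Matrix (Fin n) (Fin n) ℤ) (σ : Fin n → Fin (n + 1)), IsUnit A.det ∧
      Function.Injective σ ∧ (∀ i, σ i ≠ k) ∧ (∀ j ≠ k, ∃ i, σ i = j) ∧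
      ∀ j a, (A *ᵥ v j) a = if j = σ a then univ.gcd (v (σ a) - v k) - 1 else -1 := by
  obtain ⟨-, E, d, -, hE, -, hd⟩ := hsmooth _ hk
  obtain ⟨σ, hσinj, hσk, hg, hσ⟩ := exists_edge_endpoints hw k hE hd
  have hsurj := fun j (hj : j ≠ k) => exists_eq_of_injective_of_ne hσinj hσk hj
  refine ⟨_, σ, ?_, hσinj, hσk, hsurj, inv_transpose_mulVec_vertex hw hrefl hσk hsurj hd hg hσ⟩
  rw [Matrix.det_transpose]
  exact Matrix.isUnit_nonsing_inv_det _ hd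

lemma gcd_sub_eq_succ (hspan : affineSpan ℝ (Set.range fun k => (Int.cast ∘ v k : Fin n → ℝ)) = ⊤)
    {A : Fin (n + 1) → Matrix (Fin n) (Fin n) ℤ} {σ : Fin (n + 1) → Fin n → Fin (n + 1)}
    (hσ : ∀ k, ∀ j ≠ k, ∃ i, σ k i = j)
    (hAv : ∀ k j a, (A k *ᵥ v j) a = if j = σ k a then univ.gcd (v (σ k a) - v k) - 1 else -1)
    {j k : Fin (n + 1)} (hjk : j ≠ k) : univ.gcd (v j - v k) = n + 1 := by
  obtain ⟨μ, hμ1, hμ0⟩ := eq_affineCombination_of_mem_affineSpan_of_fintype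
    (hspan ▸ AffineSubspace.mem_top ℝ _ (0 : Fin n → ℝ))
  rw [affineCombination_eq_linear_combination _ _ _ hμ1] at hμ0
  suffices h : ∀ j k, j ≠ k → μ j * ((univ.gcd (v j - v k) : ℤ) : ℝ) = 1 by
    exact_mod_cast eq_card_of_mul_eq_one hμ1 (ℓ := fun k j => ((univ.gcd (v j - v k) : ℤ) : ℝ))
      (fun j k => by rw [← neg_sub, gcd_neg_eq]) h hjk
  intro j k hjk
  obtain ⟨a, rfl⟩ := hσ k j hjk
  refine mul_eq_one_of_sum_smul_eq_zero
    ((LinearMap.proj a).comp (Matrix.mulVecLin ((A k).map (Int.cast : ℤ → ℝ)))) hμ0.symm hμ1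
    fun j => ?_
  simp [mulVec_intCast, hAv]

end Vertex

section MonotoneSimplex

variable {n : ℕ}

def monotoneSimplexVertex (n : ℕ) (l : Fin (n + 1)) : Fin n → ℝ :=
  fun a => if l = a.succ then (n : ℝ) else -1

lemma convex_monotoneSimplex (n : ℕ) : Convex ℝ (monotoneSimplex n) := by
  have hsum : IsLinearMap ℝ fun x : Fin n → ℝ => ∑ i, x i :=
    ⟨fun x y => sum_add_distrib, fun c x => by simp [mul_sum]⟩
  have h : monotoneSimplex n = (⋂ i, {x | -1 ≤ x i}) ∩ {x | ∑ i, x i ≤ 1} := by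
    ext x
    simp [monotoneSimplex]
  rw [h]
  exact (convex_iInter fun i => convex_halfSpace_ge (LinearMap.proj i).isLinear _).inter
    (convex_halfSpace_le hsum _)

lemma monotoneSimplexVertex_mem (l : Fin (n + 1)) :
    monotoneSimplexVertex n l ∈ monotoneSimplex n := by
  have hsum : ∑ a, monotoneSimplexVertex n l a = (if l = 0 then 0 else (n : ℝ) + 1) - n := by
    have : ∀ a : Fin n, monotoneSimplexVertex n l a = (if l = a.succ then (n : ℝ) + 1 else 0) - 1 :=
      fun a => by unfold monotoneSimplexVertex; split_ifs <;> ring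
    simp only [this, sum_sub_distrib, sum_const, card_univ, Fintype.card_fin, nsmul_eq_mul, mul_one]
    cases l using Fin.cases <;> simp [Fin.succ_ne_zero, eq_comm]
  refine ⟨fun a => ?_, ?_⟩
  · unfold monotoneSimplexVertex
    split_ifs <;> linarith [(n.cast_nonneg : (0 : ℝ) ≤ n)]
  · rw [hsum]
    split_ifs <;> linarith [(n.cast_nonneg : (0 : ℝ) ≤ n)]

lemma convexHull_range_monotoneSimplexVertex (n : ℕ) :
    convexHull ℝ (Set.range (monotoneSimplexVertex n)) = monotoneSimplex n := by
  refine subset_antisymm (convexHull_min (Set.range_subset_iff.mpr monotoneSimplexVertex_mem)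
    (convex_monotoneSimplex n)) fun x ⟨hx, hxs⟩ => ?_
  have hn : (0 : ℝ) < n + 1 := by positivity
  let μ : Fin (n + 1) → ℝ := Fin.cases ((1 - ∑ i, x i) / (n + 1)) fun a => (x a + 1) / (n + 1)
  have hμ : ∑ l, μ l = 1 := by
    rw [Fin.sum_univ_succ]
    simp only [μ, Fin.cases_zero, Fin.cases_succ, ← add_div, ← sum_div, sum_add_distrib,
      sum_const, card_univ, Fintype.card_fin, nsmul_eq_mul, mul_one]
    field_simp
    ring
  have hcm : univ.centerMass μ (monotoneSimplexVertex n) = x := by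
    rw [centerMass_eq_of_sum_1 _ _ hμ]
    funext a
    have hterm : ∀ l, μ l * monotoneSimplexVertex n l a =
        (if l = a.succ then μ l * (n + 1) else 0) - μ l :=
      fun l => by unfold monotoneSimplexVertex; split_ifs <;> ring
    simp only [Finset.sum_apply, Pi.smul_apply, smul_eq_mul, hterm, sum_sub_distrib, sum_ite_eq',
      mem_univ, if_true, hμ]
    simp only [μ, Fin.cases_succ]
    field_simp
    ring
  rw [← hcm]
  exact centerMass_mem_convexHull _ (fun l _ => by
      cases l using Fin.cases <;> simp only [μ, Fin.cases_zero, Fin.cases_succ] <;>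
        [exact div_nonneg (by linarith) hn.le; exact div_nonneg (by linarith [hx ‹_›]) hn.le])
    (by rw [hμ]; exact one_pos) fun l _ => Set.mem_range_self l

lemma image_convexHull_eq_monotoneSimplex {v : Fin (n + 1) → Fin n → ℤ}
    {A : Matrix (Fin n) (Fin n) ℤ} {k : Fin (n + 1)} {σ : Fin n → Fin (n + 1)}
    (hσinj : Function.Injective σ) (hσk : ∀ i, σ i ≠ k) (hσ : ∀ j ≠ k, ∃ i, σ i = j)
    (hA : ∀ j a, (A *ᵥ v j) a = if j = σ a then (n : ℤ) else -1) :
    (fun x : Fin n → ℝ => fun i => ∑ j, (A i j : ℝ) * x j) ''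
      convexHull ℝ (Set.range fun k => Int.cast ∘ v k) = monotoneSimplex n := by
  set L := Matrix.mulVecLin (A.map (Int.cast : ℤ → ℝ))
  have hLv : ∀ j, L (Int.cast ∘ v j) = fun a => if j = σ a then (n : ℝ) else -1 := fun j => by
    funext a
    rw [Matrix.mulVecLin_apply, mulVec_intCast, Function.comp_apply, hA]
    split_ifs <;> simp
  have hrange : Set.range (fun j => L (Int.cast ∘ v j)) = Set.range (monotoneSimplexVertex n) := by
    ext y
    constructor
    · rintro ⟨j, rfl⟩
      rcases eq_or_ne j k with rfl | hj
      · exact ⟨0, funext fun a => by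
          simp [hLv, monotoneSimplexVertex, (hσk a).symm, (Fin.succ_ne_zero a).symm]⟩
      · obtain ⟨b, rfl⟩ := hσ j hj
        exact ⟨b.succ, funext fun a => by simp [hLv, monotoneSimplexVertex, hσinj.eq_iff]⟩
    · rintro ⟨l, rfl⟩
      cases l using Fin.cases with
      | zero => exact ⟨k, funext fun a => by
          simp [hLv, monotoneSimplexVertex, (hσk a).symm, (Fin.succ_ne_zero a).symm]⟩
      | succ b => exact ⟨σ b, funext fun a => by simp [hLv, monotoneSimplexVertex, hσinj.eq_iff]⟩
  change L '' _ = _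
  rw [L.image_convexHull, ← Set.range_comp, ← convexHull_range_monotoneSimplexVertex]
  exact congrArg _ hrange

end MonotoneSimplex

/-- every monotone polytope `P ⊆ ℝ^n` which is a simplex (i.e.,
has exactly `n + 1` vertices) is `GL(n,ℤ)`-equivalent to the monotone simplex
`Δ = {x : x i ≥ -1 ∀ i, ∑ x i ≤ 1}`. -/
theorem monotone_simplex_unique {n : ℕ} (P : Set (Fin n → ℝ))
    (hP : IsMonotonePolytope P) (V : Finset (Fin n → ℝ))
    (hV : ∀ v, IsVertexOf P v ↔ v ∈ V) (hcard : V.card = n + 1) :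
    ∃ A : Matrix (Fin n) (Fin n) ℤ, IsUnit A.det ∧
      (fun x : Fin n → ℝ => fun i => ∑ j, (A i j : ℝ) * x j) '' P =
        monotoneSimplex n := by
  obtain ⟨⟨V', hV'lat, rfl, hspan⟩, hsmooth, -, hrefl⟩ := hP
  obtain ⟨v, hv, hPv⟩ := exists_intCast_vertices hV'lat hV hcard
  rw [hPv, affineSpan_convexHull] at hspan
  rw [hPv] at hsmooth hrefl hV ⊢
  have hw := affineIndependent_of_affineSpan_eq_top hspan
  choose A σ hA hσinj hσk hσ hAv using fun k =>
    hsmooth.exists_vertex_chart hw hrefl ((hV _).mpr (by rw [← mem_coe, ← hv]; exact ⟨k, rfl⟩))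
  refine ⟨A 0, hA 0, image_convexHull_eq_monotoneSimplex (hσinj 0) (hσk 0) (hσ 0) fun j a => ?_⟩
  rw [hAv, gcd_sub_eq_succ hspan hσ hAv (hσk 0 a)]
  split_ifs <;> ring
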